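/- arXiv:2409.10575 — 2 statements merged into one kernel-verified Lean document; each statement's English description precedes it below -/
import Mathlib

section
/- Let $M_1$ be a $b$-matching with set $B_1$ of blocking pairs, and let $M_2$ be obtained from $M_1$ by removing a blocking pair $(u,w)\in B_1$: if $u$ is full, disconnect $u$ from its worst partner $w'$; if $w$ is full, disconnect $w$ from its worst partner $u'$; then add edge $(u,w)$. Let $B_2$ be the set of blocking pairs of $M_2$. If $B_2\setminus B_1\neq\varnothing$, then at least one of $u'$ or $w'$ exists, and every blocking pair in $B_2\setminus B_1$ involves $u'$ or $w'$. -/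
def partnersU {U W : Type*} [DecidableEq U] [DecidableEq W]
    (M : Finset (U × W)) (u : U) : Finset W :=
  (M.filter (fun p => p.1 = u)).image Prod.snd

def partnersW {U W : Type*} [DecidableEq U] [DecidableEq W]
    (M : Finset (U × W)) (w : W) : Finset U :=
  (M.filter (fun p => p.2 = w)).image Prod.fst


lemma pU_mem {U W : Type*} [DecidableEq U] [DecidableEq W]
    {M : Finset (U × W)} {u : U} {y : W} :
    y ∈ partnersU M u ↔ (u, y) ∈ M := by
  simp only [partnersU, Finset.mem_image, Finset.mem_filter]
  constructor
  · rintro ⟨⟨a, b⟩, ⟨hm, ha⟩, hb⟩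
    simp only at ha hb; subst ha; subst hb; exact hm
  · intro h; exact ⟨(u, y), ⟨h, rfl⟩, rfl⟩

lemma pW_mem {U W : Type*} [DecidableEq U] [DecidableEq W]
    {M : Finset (U × W)} {w : W} {x : U} :
    x ∈ partnersW M w ↔ (x, w) ∈ M := by
  simp only [partnersW, Finset.mem_image, Finset.mem_filter]
  constructor
  · rintro ⟨⟨a, b⟩, ⟨hm, ha⟩, hb⟩
    simp only at ha hb; subst ha; subst hb; exact hm
  · intro h; exact ⟨(x, w), ⟨h, rfl⟩, rfl⟩

/-- Blocking pair of a b-matching under strict ranks (lower = better). -/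
def IsBlockingPair {U W : Type*} [DecidableEq U] [DecidableEq W]
    (E : U → W → Prop) (bU : U → ℕ) (bW : W → ℕ)
    (ru : U → W → ℕ) (rw : W → U → ℕ)
    (M : Finset (U × W)) (u : U) (w : W) : Prop :=
  E u w ∧ (u, w) ∉ M ∧
    ((partnersU M u).card < bU u ∨ ∃ w' ∈ partnersU M u, ru u w < ru u w') ∧
    ((partnersW M w).card < bW w ∨ ∃ u' ∈ partnersW M w, rw w u < rw w u')

/-- Proposition 2: let `M₁` be a b-matching and `(u,w)` a blocking pair of `M₁`.
Remove it: if `u` is full, disconnect `u` from its worst partner `w'` (otherwise `w'`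
is undefined, i.e. `none`); if `w` is full, disconnect `w` from its worst partner `u'`;
then add the edge `(u,w)`, obtaining `M₂`.  If some blocking pair of `M₂` is not a
blocking pair of `M₁`, then at least one of `u'`, `w'` exists, and every blocking pair
of `M₂` that is not one of `M₁` involves `u'` or `w'`. -/
theorem new_blocking_pairs_involve_disconnected_agents
    {U W : Type*} [DecidableEq U] [DecidableEq W]
    (E : U → W → Prop) (bU : U → ℕ) (bW : W → ℕ)
    (ru : U → W → ℕ) (rw : W → U → ℕ)
    (M₁ : Finset (U × W)) (u : U) (w : W)
    (hbp : IsBlockingPair E bU bW ru rw M₁ u w)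
    (w' : Option W) (u' : Option U)
    -- `w'` is defined iff `u` is full, and is then the worst partner of `u`
    (hw'def : (partnersU M₁ u).card = bU u ↔ w'.isSome)
    (hw'worst : ∀ x, w' = some x →
      x ∈ partnersU M₁ u ∧ ∀ y ∈ partnersU M₁ u, ru u y ≤ ru u x)
    -- `u'` is defined iff `w` is full, and is then the worst partner of `w`
    (hu'def : (partnersW M₁ w).card = bW w ↔ u'.isSome)
    (hu'worst : ∀ x, u' = some x →
      x ∈ partnersW M₁ w ∧ ∀ y ∈ partnersW M₁ w, rw w y ≤ rw w x)
    (M₂ : Finset (U × W))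
    (hM₂ : M₂ = (M₁ \ ((w'.elim ∅ fun x => {(u, x)}) ∪ (u'.elim ∅ fun x => {(x, w)})))
      ∪ {(u, w)})
    (hnew : ∃ x y, IsBlockingPair E bU bW ru rw M₂ x y ∧
      ¬ IsBlockingPair E bU bW ru rw M₁ x y) :
    (u'.isSome ∨ w'.isSome) ∧
      ∀ x y, IsBlockingPair E bU bW ru rw M₂ x y →
        ¬ IsBlockingPair E bU bW ru rw M₁ x y →
        u' = some x ∨ w' = some y := by
  obtain ⟨hE0, hnm0, hcu, hcw⟩ := hbp
  have hmem : ∀ a b, (a, b) ∈ M₂ ↔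
      ((a, b) ∈ M₁ ∧ ¬(a = u ∧ w' = some b) ∧ ¬(u' = some a ∧ b = w)) ∨
        (a = u ∧ b = w) := by
    intro a b
    subst hM₂
    clear hw'def hw'worst hu'def hu'worst hcu hcw hnew hnm0
    rcases w' with _ | c <;> rcases u' with _ | d <;>
      simp [Finset.mem_union, Finset.mem_sdiff, Prod.ext_iff] <;> tauto
  -- basic facts
  have hu'ne : ∀ a, u' = some a → a ≠ u := by
    intro a ha h
    rw [h] at ha
    exact hnm0 (pW_mem.1 (hu'worst _ ha).1)
  have hw'ne : ∀ b, w' = some b → b ≠ w := by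
    intro b hb h
    rw [h] at hb
    exact hnm0 (pU_mem.1 (hw'worst _ hb).1)
  -- partner-set computations
  have hPU_ne : ∀ x, x ≠ u → u' ≠ some x → partnersU M₂ x = partnersU M₁ x := by
    intro x hx hux
    ext z
    rw [pU_mem, pU_mem, hmem]
    constructor
    · rintro (⟨h, -, -⟩ | ⟨rfl, rfl⟩)
      · exact h
      · exact absurd rfl hx
    · intro h
      exact Or.inl ⟨h, fun h1 => hx h1.1, fun h1 => hux h1.1⟩
  have hPW_ne : ∀ y, y ≠ w → w' ≠ some y → partnersW M₂ y = partnersW M₁ y := by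
    intro y hy hwy
    ext z
    rw [pW_mem, pW_mem, hmem]
    constructor
    · rintro (⟨h, -, -⟩ | ⟨rfl, rfl⟩)
      · exact h
      · exact absurd rfl hy
    · intro h
      exact Or.inl ⟨h, fun h1 => hwy h1.2, fun h1 => hy h1.2⟩
  have hPU_u_none : w' = none → partnersU M₂ u = insert w (partnersU M₁ u) := by
    intro hw0
    ext z
    rw [pU_mem, Finset.mem_insert, pU_mem, hmem]
    constructor
    · rintro (⟨h, -, -⟩ | ⟨-, rfl⟩)
      · exact Or.inr h
      · exact Or.inl rfl
    · rintro (rfl | h)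
      · exact Or.inr ⟨rfl, rfl⟩
      · exact Or.inl ⟨h, fun h1 => by rw [hw0] at h1; exact (Option.some_ne_none _ h1.2.symm).elim,
          fun h1 => hu'ne _ h1.1 rfl⟩
  have hPU_u_some : ∀ a, w' = some a → partnersU M₂ u = insert w ((partnersU M₁ u).erase a) := by
    intro a ha
    ext z
    rw [pU_mem, Finset.mem_insert, Finset.mem_erase, pU_mem, hmem]
    constructor
    · rintro (⟨h, h1, -⟩ | ⟨-, rfl⟩)
      · refine Or.inr ⟨?_, h⟩
        rintro rfl
        exact h1 ⟨rfl, ha⟩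
      · exact Or.inl rfl
    · rintro (rfl | ⟨hz, h⟩)
      · exact Or.inr ⟨rfl, rfl⟩
      · refine Or.inl ⟨h, ?_, fun h1 => hu'ne _ h1.1 rfl⟩
        rintro ⟨-, h2⟩
        rw [ha] at h2
        exact hz (Option.some.inj h2).symm
  have hPW_w_none : u' = none → partnersW M₂ w = insert u (partnersW M₁ w) := by
    intro hu0
    ext z
    rw [pW_mem, Finset.mem_insert, pW_mem, hmem]
    constructor
    · rintro (⟨h, -, -⟩ | ⟨rfl, -⟩)
      · exact Or.inr h
      · exact Or.inl rfl
    · rintro (rfl | h)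
      · exact Or.inr ⟨rfl, rfl⟩
      · exact Or.inl ⟨h, fun h1 => hw'ne _ h1.2 rfl,
          fun h1 => by rw [hu0] at h1; exact (Option.some_ne_none _ h1.1.symm).elim⟩
  have hPW_w_some : ∀ a, u' = some a → partnersW M₂ w = insert u ((partnersW M₁ w).erase a) := by
    intro a ha
    ext z
    rw [pW_mem, Finset.mem_insert, Finset.mem_erase, pW_mem, hmem]
    constructor
    · rintro (⟨h, -, h1⟩ | ⟨rfl, -⟩)
      · refine Or.inr ⟨?_, h⟩
        rintro rfl
        exact h1 ⟨ha, rfl⟩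
      · exact Or.inl rfl
    · rintro (rfl | ⟨hz, h⟩)
      · exact Or.inr ⟨rfl, rfl⟩
      · refine Or.inl ⟨h, fun h1 => hw'ne _ h1.2 rfl, ?_⟩
        rintro ⟨h2, -⟩
        rw [ha] at h2
        exact hz (Option.some.inj h2).symm
  have key : ∀ x y, IsBlockingPair E bU bW ru rw M₂ x y →
      ¬ IsBlockingPair E bU bW ru rw M₁ x y → u' = some x ∨ w' = some y := by
    intro x y h2 h1
    by_contra hcon
    push_neg at hcon
    obtain ⟨hxu', hyw'⟩ := hcon
    obtain ⟨hE, hnm2, hx2, hy2⟩ := h2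
    apply h1
    refine ⟨hE, ?_, ?_, ?_⟩
    · -- (x, y) ∉ M₁
      intro hin
      apply hnm2
      rw [hmem]
      exact Or.inl ⟨hin, fun h => hyw' h.2, fun h => hxu' h.1⟩
    · -- U-side condition
      by_cases hxu : x = u
      · subst hxu
        have hyw : y ≠ w := by
          rintro rfl
          exact hnm2 ((hmem x y).2 (Or.inr ⟨rfl, rfl⟩))
        by_contra hC
        push_neg at hC
        obtain ⟨hcard, hworst⟩ := hC
        have hwy : ru x w < ru x y := by
          rcases hcu with h | ⟨z, hz, hzlt⟩
          · omega
          · exact lt_of_lt_of_le hzlt (hworst z hz)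
        rcases hw0 : w' with _ | a
        · have hne : (partnersU M₁ x).card ≠ bU x := by
            intro h
            rw [hw'def, hw0] at h
            simp at h
          rw [hPU_u_none hw0] at hx2
          rcases hx2 with h | ⟨z, hz, hzlt⟩
          · have := Finset.card_le_card (Finset.subset_insert w (partnersU M₁ x))
            omega
          · rcases Finset.mem_insert.1 hz with rfl | hz1
            · omega
            · exact absurd hzlt (not_lt.2 (hworst z hz1))
        · obtain ⟨haP, -⟩ := hw'worst a hw0
          have hcard1 : (partnersU M₁ x).card = bU x := hw'def.2 (by rw [hw0]; rfl)
          have hwnP : w ∉ partnersU M₁ x := fun h => hnm0 (pU_mem.1 h)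
          rw [hPU_u_some a hw0] at hx2
          have hpos : 0 < (partnersU M₁ x).card := Finset.card_pos.2 ⟨a, haP⟩
          have hcard2 : (insert w ((partnersU M₁ x).erase a)).card = bU x := by
            rw [Finset.card_insert_of_notMem (fun h => hwnP (Finset.mem_erase.1 h).2),
              Finset.card_erase_of_mem haP]
            omega
          rcases hx2 with h | ⟨z, hz, hzlt⟩
          · omega
          · rcases Finset.mem_insert.1 hz with rfl | hz1
            · omega
            · exact absurd hzlt (not_lt.2 (hworst z (Finset.mem_erase.1 hz1).2))
      · rw [hPU_ne x hxu hxu'] at hx2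
        exact hx2
    · -- W-side condition
      by_cases hyw : y = w
      · subst hyw
        have hxu : x ≠ u := by
          rintro rfl
          exact hnm2 ((hmem x y).2 (Or.inr ⟨rfl, rfl⟩))
        by_contra hC
        push_neg at hC
        obtain ⟨hcard, hworst⟩ := hC
        have hux : rw y u < rw y x := by
          rcases hcw with h | ⟨z, hz, hzlt⟩
          · omega
          · exact lt_of_lt_of_le hzlt (hworst z hz)
        rcases hu0 : u' with _ | a
        · have hne : (partnersW M₁ y).card ≠ bW y := by
            intro h
            rw [hu'def, hu0] at h
            simp at h
          rw [hPW_w_none hu0] at hy2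
          rcases hy2 with h | ⟨z, hz, hzlt⟩
          · have := Finset.card_le_card (Finset.subset_insert u (partnersW M₁ y))
            omega
          · rcases Finset.mem_insert.1 hz with rfl | hz1
            · omega
            · exact absurd hzlt (not_lt.2 (hworst z hz1))
        · obtain ⟨haP, -⟩ := hu'worst a hu0
          have hcard1 : (partnersW M₁ y).card = bW y := hu'def.2 (by rw [hu0]; rfl)
          have hunP : u ∉ partnersW M₁ y := fun h => hnm0 (pW_mem.1 h)
          rw [hPW_w_some a hu0] at hy2
          have hpos : 0 < (partnersW M₁ y).card := Finset.card_pos.2 ⟨a, haP⟩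
          have hcard2 : (insert u ((partnersW M₁ y).erase a)).card = bW y := by
            rw [Finset.card_insert_of_notMem (fun h => hunP (Finset.mem_erase.1 h).2),
              Finset.card_erase_of_mem haP]
            omega
          rcases hy2 with h | ⟨z, hz, hzlt⟩
          · omega
          · rcases Finset.mem_insert.1 hz with rfl | hz1
            · omega
            · exact absurd hzlt (not_lt.2 (hworst z (Finset.mem_erase.1 hz1).2))
      · rw [hPW_ne y hyw hyw'] at hy2
        exact hy2
  refine ⟨?_, key⟩
  obtain ⟨x, y, h2, h1⟩ := hnew
  rcases key x y h2 h1 with h | h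
  · exact Or.inl (by rw [h]; rfl)
  · exact Or.inr (by rw [h]; rfl)
end

section
/- If the BP removal process in Algorithm 4 terminates with an empty examination set $X$ (starting from $X=Q_a$ and adding, upon each removal, exactly the previously-full agents that got disconnected), then the resulting matching is stable under the current strict preferences. -/
/-- One step of the BP removal process of Algorithm 4 on a state `(M, X)` consisting
of the current matching and the examination set.  Either an agent of `X` involved in
no blocking pair is popped, or a blocking pair involving an agent of `X` is removed
(disconnecting the worst partners of its full endpoints) and exactly the
previously-full agents that got disconnected are added to `X`. -/
def RemovalStep {U W : Type*} [DecidableEq U] [DecidableEq W]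
    (E : U → W → Prop) (bU : U → ℕ) (bW : W → ℕ)
    (ru : U → W → ℕ) (rw : W → U → ℕ)
    (s s' : Finset (U × W) × Finset (U ⊕ W)) : Prop :=
  -- pop an agent of `X` involved in no blocking pair of the current matching
  (∃ v ∈ s.2,
      (∀ u w, IsBlockingPair E bU bW ru rw s.1 u w → v ≠ Sum.inl u ∧ v ≠ Sum.inr w) ∧
      s'.1 = s.1 ∧ s'.2 = s.2.erase v) ∨
  -- or remove a blocking pair involving an agent of `X`
  (∃ u w, (Sum.inl u ∈ s.2 ∨ Sum.inr w ∈ s.2) ∧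
    IsBlockingPair E bU bW ru rw s.1 u w ∧
    ∃ w' : Option W, ∃ u' : Option U,
      ((partnersU s.1 u).card = bU u ↔ w'.isSome) ∧
      (∀ x, w' = some x →
        x ∈ partnersU s.1 u ∧ ∀ y ∈ partnersU s.1 u, ru u y ≤ ru u x) ∧
      ((partnersW s.1 w).card = bW w ↔ u'.isSome) ∧
      (∀ x, u' = some x →
        x ∈ partnersW s.1 w ∧ ∀ y ∈ partnersW s.1 w, rw w y ≤ rw w x) ∧
      s'.1 = (s.1 \ ((w'.elim ∅ fun x => {(u, x)}) ∪ (u'.elim ∅ fun x => {(x, w)})))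
        ∪ {(u, w)} ∧
      s'.2 = (s.2
        ∪ (w'.elim ∅ fun x =>
            if (partnersW s.1 x).card = bW x then {Sum.inr x} else ∅))
        ∪ (u'.elim ∅ fun x =>
            if (partnersU s.1 x).card = bU x then {Sum.inl x} else ∅))

lemma mem_partnersU {U W : Type*} [DecidableEq U] [DecidableEq W]
    (M : Finset (U × W)) (a : U) (x : W) : x ∈ partnersU M a ↔ (a, x) ∈ M := by
  simp [partnersU]
lemma mem_partnersW {U W : Type*} [DecidableEq U] [DecidableEq W]
    (M : Finset (U × W)) (b : W) (x : U) : x ∈ partnersW M b ↔ (x, b) ∈ M := by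
  simp [partnersW]

lemma removal_step_inv {U W : Type*} [DecidableEq U] [DecidableEq W]
    (E : U → W → Prop) (bU : U → ℕ) (bW : W → ℕ)
    (ru : U → W → ℕ) (rw : W → U → ℕ)
    {s s' : Finset (U × W) × Finset (U ⊕ W)}
    (hs : RemovalStep E bU bW ru rw s s')
    (hinv : ∀ u w, IsBlockingPair E bU bW ru rw s.1 u w →
      Sum.inl u ∈ s.2 ∨ Sum.inr w ∈ s.2) :
    ∀ u w, IsBlockingPair E bU bW ru rw s'.1 u w →
      Sum.inl u ∈ s'.2 ∨ Sum.inr w ∈ s'.2 := by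
  rcases hs with ⟨v, hv, hnb, hM, hX⟩ |
    ⟨u, w, hXuw, hBP, w', u', hfu, hmaxu, hfw, hmaxw, hM', hX'⟩
  · intro a b hab
    rw [hM] at hab
    rcases hinv a b hab with h | h
    · exact Or.inl (by rw [hX]; exact Finset.mem_erase.2 ⟨Ne.symm (hnb a b hab).1, h⟩)
    · exact Or.inr (by rw [hX]; exact Finset.mem_erase.2 ⟨Ne.symm (hnb a b hab).2, h⟩)
  · obtain ⟨hEuw, huwM, hu_cond, hw_cond⟩ := hBP
    set M := s.1 with hMdef
    -- membership characterization of the new matching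
    have hmem : ∀ p : U × W, p ∈ s'.1 ↔
        ((p ∈ M ∧ (∀ x, w' = some x → p ≠ (u, x)) ∧ (∀ y, u' = some y → p ≠ (y, w)))
          ∨ p = (u, w)) := by
      intro p
      rw [hM']
      cases w' <;> cases u' <;> simp [Finset.mem_sdiff] <;> tauto
    -- basic facts
    have hxw : ∀ x, w' = some x → x ≠ w := by
      rintro x hx rfl
      exact huwM ((mem_partnersU M u x).1 (hmaxu x hx).1)
    have hyu : ∀ y, u' = some y → y ≠ u := by
      rintro y hy rfl
      exact huwM ((mem_partnersW M w y).1 (hmaxw y hy).1)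
    have hXsub : s.2 ⊆ s'.2 := by
      rw [hX']; intro z hz
      exact Finset.mem_union_left _ (Finset.mem_union_left _ hz)
    -- partner computations
    have hPUu : ∀ x, w' = some x →
        partnersU s'.1 u = insert w ((partnersU M u).erase x) := by
      intro x hx
      ext z
      simp only [mem_partnersU, hmem, Finset.mem_insert, Finset.mem_erase,
        mem_partnersU]
      constructor
      · rintro (⟨hm, h1, _⟩ | h)
        · exact Or.inr ⟨fun hz => (h1 x hx) (by rw [hz]), hm⟩
        · exact Or.inl (congrArg Prod.snd h)
      · rintro (rfl | ⟨hzx, hm⟩)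
        · exact Or.inr rfl
        · refine Or.inl ⟨hm, ?_, ?_⟩
          · rintro x' hx' he
            rw [hx] at hx'; cases hx'
            exact hzx (congrArg Prod.snd he)
          · rintro y hy he
            exact hyu y hy (congrArg Prod.fst he).symm
    have hPUu' : w' = none → partnersU s'.1 u = insert w (partnersU M u) := by
      intro hx
      ext z
      simp only [mem_partnersU, hmem, Finset.mem_insert, mem_partnersU]
      constructor
      · rintro (⟨hm, _, _⟩ | h)
        · exact Or.inr hm
        · exact Or.inl (congrArg Prod.snd h)
      · rintro (rfl | hm)
        · exact Or.inr rfl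
        · refine Or.inl ⟨hm, ?_, ?_⟩
          · rintro x' hx' he; rw [hx] at hx'; cases hx'
          · rintro y hy he
            exact hyu y hy (congrArg Prod.fst he).symm
    have hPUa : ∀ a, a ≠ u → (∀ y, u' = some y → a ≠ y) →
        partnersU s'.1 a = partnersU M a := by
      intro a hau hay
      ext z
      simp only [mem_partnersU, hmem]
      constructor
      · rintro (⟨hm, _, _⟩ | h)
        · exact hm
        · exact absurd (congrArg Prod.fst h) hau
      · intro hm
        refine Or.inl ⟨hm, ?_, ?_⟩
        · rintro x hx he; exact hau (congrArg Prod.fst he)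
        · rintro y hy he; exact hay y hy (congrArg Prod.fst he)
    have hPUy : ∀ y, u' = some y → y ≠ u →
        partnersU s'.1 y = (partnersU M y).erase w := by
      intro y hy hyune
      ext z
      simp only [mem_partnersU, hmem, Finset.mem_erase, mem_partnersU]
      constructor
      · rintro (⟨hm, _, h2⟩ | h)
        · exact ⟨fun hz => (h2 y hy) (by rw [hz]), hm⟩
        · exact absurd (congrArg Prod.fst h) hyune
      · rintro ⟨hzw, hm⟩
        refine Or.inl ⟨hm, ?_, ?_⟩
        · rintro x hx he; exact absurd (congrArg Prod.fst he) hyune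
        · rintro y' hy' he
          rw [hy] at hy'; cases hy'
          exact hzw (congrArg Prod.snd he)
    have hPWw : ∀ y, u' = some y →
        partnersW s'.1 w = insert u ((partnersW M w).erase y) := by
      intro y hy
      ext z
      simp only [mem_partnersW, hmem, Finset.mem_insert, Finset.mem_erase,
        mem_partnersW]
      constructor
      · rintro (⟨hm, _, h2⟩ | h)
        · exact Or.inr ⟨fun hz => (h2 y hy) (by rw [hz]), hm⟩
        · exact Or.inl (congrArg Prod.fst h)
      · rintro (rfl | ⟨hzy, hm⟩)
        · exact Or.inr rfl
        · refine Or.inl ⟨hm, ?_, ?_⟩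
          · rintro x hx he
            exact hxw x hx (congrArg Prod.snd he).symm
          · rintro y' hy' he
            rw [hy] at hy'; cases hy'
            exact hzy (congrArg Prod.fst he)
    have hPWw' : u' = none → partnersW s'.1 w = insert u (partnersW M w) := by
      intro hy
      ext z
      simp only [mem_partnersW, hmem, Finset.mem_insert, mem_partnersW]
      constructor
      · rintro (⟨hm, _, _⟩ | h)
        · exact Or.inr hm
        · exact Or.inl (congrArg Prod.fst h)
      · rintro (rfl | hm)
        · exact Or.inr rfl
        · refine Or.inl ⟨hm, ?_, ?_⟩
          · rintro x hx he
            exact hxw x hx (congrArg Prod.snd he).symm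
          · rintro y hy' he; rw [hy] at hy'; cases hy'
    have hPWb : ∀ b, b ≠ w → (∀ x, w' = some x → b ≠ x) →
        partnersW s'.1 b = partnersW M b := by
      intro b hbw hbx
      ext z
      simp only [mem_partnersW, hmem]
      constructor
      · rintro (⟨hm, _, _⟩ | h)
        · exact hm
        · exact absurd (congrArg Prod.snd h) hbw
      · intro hm
        refine Or.inl ⟨hm, ?_, ?_⟩
        · rintro x hx he; exact hbx x hx (congrArg Prod.snd he)
        · rintro y hy he; exact hbw (congrArg Prod.snd he)
    have hPWx : ∀ x, w' = some x → x ≠ w →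
        partnersW s'.1 x = (partnersW M x).erase u := by
      intro x hx hxwne
      ext z
      simp only [mem_partnersW, hmem, Finset.mem_erase, mem_partnersW]
      constructor
      · rintro (⟨hm, h1, _⟩ | h)
        · exact ⟨fun hz => (h1 x hx) (by rw [hz]), hm⟩
        · exact absurd (congrArg Prod.snd h) hxwne
      · rintro ⟨hzu, hm⟩
        refine Or.inl ⟨hm, ?_, ?_⟩
        · rintro x' hx' he
          rw [hx] at hx'; cases hx'
          exact hzu (congrArg Prod.fst he)
        · rintro y hy he; exact absurd (congrArg Prod.snd he) hxwne
    -- fullness facts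
    have hwsome : ∀ x, w' = some x → (partnersU M u).card = bU u := by
      intro x hx; exact hfu.2 (by rw [hx]; rfl)
    have husome : ∀ y, u' = some y → (partnersW M w).card = bW w := by
      intro y hy; exact hfw.2 (by rw [hy]; rfl)
    have hwnone : w' = none → (partnersU M u).card ≠ bU u := by
      intro h hc; have h2 := hfu.1 hc; rw [h] at h2; simp at h2
    have hunone : u' = none → (partnersW M w).card ≠ bW w := by
      intro h hc; have h2 := hfw.1 hc; rw [h] at h2; simp at h2
    have hprefu : ∀ x, w' = some x → ru u w < ru u x := by
      intro x hx
      rcases hu_cond with h | ⟨w'', hw'', hlt⟩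
      · have := hwsome x hx; omega
      · exact lt_of_lt_of_le hlt ((hmaxu x hx).2 w'' hw'')
    have hprefw : ∀ y, u' = some y → rw w u < rw w y := by
      intro y hy
      rcases hw_cond with h | ⟨u'', hu'', hlt⟩
      · have := husome y hy; omega
      · exact lt_of_lt_of_le hlt ((hmaxw y hy).2 u'' hu'')
    -- new members of the examination set
    have hXw' : ∀ x, w' = some x → (partnersW M x).card = bW x →
        Sum.inr x ∈ s'.2 := by
      intro x hx hc; rw [hX', hx]; simp [hc]
    have hXu' : ∀ y, u' = some y → (partnersU M y).card = bU y →
        Sum.inl y ∈ s'.2 := by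
      intro y hy hc; rw [hX', hy]; simp [hc]
    -- cardinality of u's new partner set when w' = some x
    have hcardu : ∀ x, w' = some x →
        (insert w ((partnersU M u).erase x)).card = bU u := by
      intro x hx
      have hw1 : w ∉ (partnersU M u).erase x := fun h =>
        huwM ((mem_partnersU M u w).1 (Finset.mem_of_mem_erase h))
      have hx1 : x ∈ partnersU M u := (hmaxu x hx).1
      have h2 := Finset.card_erase_of_mem hx1
      have h3 : 0 < (partnersU M u).card := Finset.card_pos.2 ⟨x, hx1⟩
      have h4 := hwsome x hx
      rw [Finset.card_insert_of_notMem hw1]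
      omega
    have hcardw : ∀ y, u' = some y →
        (insert u ((partnersW M w).erase y)).card = bW w := by
      intro y hy
      have hw1 : u ∉ (partnersW M w).erase y := fun h =>
        huwM ((mem_partnersW M w u).1 (Finset.mem_of_mem_erase h))
      have hy1 : y ∈ partnersW M w := (hmaxw y hy).1
      have h2 := Finset.card_erase_of_mem hy1
      have h3 : 0 < (partnersW M w).card := Finset.card_pos.2 ⟨y, hy1⟩
      have h4 := husome y hy
      rw [Finset.card_insert_of_notMem hw1]
      omega
    -- main case analysis
    intro a b hab
    obtain ⟨hEab, habM', hacond, hbcond⟩ := hab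
    by_cases hau : a = u
    · subst hau
      by_cases hbw : b = w
      · subst hbw; exact absurd ((hmem (a, b)).2 (Or.inr rfl)) habM'
      · -- a = u, b ≠ w : reduce to a blocking pair of M (or contradiction)
        rcases Option.eq_none_or_eq_some w' with hw' | ⟨x, hw'⟩
        · -- w' = none
          have hBPM : IsBlockingPair E bU bW ru rw M a b := by
            refine ⟨hEab, ?_, ?_, ?_⟩
            · intro h
              refine habM' ((hmem (a, b)).2 (Or.inl ⟨h, ?_, ?_⟩))
              · rintro x hx he; rw [hw'] at hx; cases hx
              · rintro y hy he; exact hyu y hy (congrArg Prod.fst he).symm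
            · rw [hPUu' hw'] at hacond
              rcases hacond with h | ⟨y, hy, hlt⟩
              · exact Or.inl (lt_of_le_of_lt
                  (Finset.card_le_card (Finset.subset_insert _ _)) h)
              · rcases Finset.mem_insert.1 hy with rfl | hy2
                · rcases hu_cond with h | ⟨w'', hw'', hlt2⟩
                  · exact Or.inl h
                  · exact Or.inr ⟨w'', hw'', lt_trans hlt hlt2⟩
                · exact Or.inr ⟨y, hy2, hlt⟩
            · rwa [hPWb b hbw (fun x hx => by rw [hw'] at hx; cases hx)] at hbcond
          rcases hinv a b hBPM with h | h
          · exact Or.inl (hXsub h)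
          · exact Or.inr (hXsub h)
        · -- w' = some x
          by_cases hbx : b = x
          · -- contradiction: (u, x) cannot block the new matching
            exfalso
            subst hbx
            rw [hPUu b hw', hcardu b hw'] at hacond
            rcases hacond with h | ⟨y, hy, hlt⟩
            · omega
            · rcases Finset.mem_insert.1 hy with rfl | hy2
              · exact absurd (hprefu b hw') (by omega)
              · exact absurd hlt (not_lt.2 ((hmaxu b hw').2 y
                  (Finset.mem_of_mem_erase hy2)))
          · have hBPM : IsBlockingPair E bU bW ru rw M a b := by
              refine ⟨hEab, ?_, ?_, ?_⟩
              · intro h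
                refine habM' ((hmem (a, b)).2 (Or.inl ⟨h, ?_, ?_⟩))
                · rintro x' hx' he
                  rw [hw'] at hx'; cases hx'
                  exact hbx (congrArg Prod.snd he)
                · rintro y hy he
                  exact hyu y hy (congrArg Prod.fst he).symm
              · rw [hPUu x hw', hcardu x hw'] at hacond
                rcases hacond with h | ⟨y, hy, hlt⟩
                · exact Or.inl (by have := hwsome x hw'; omega)
                · rcases Finset.mem_insert.1 hy with rfl | hy2
                  · exact Or.inr ⟨x, (hmaxu x hw').1, lt_trans hlt (hprefu x hw')⟩
                  · exact Or.inr ⟨y, Finset.mem_of_mem_erase hy2, hlt⟩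
              · rwa [hPWb b hbw (fun x' hx' => by
                  rw [hw'] at hx'; cases hx'; exact hbx)] at hbcond
            rcases hinv a b hBPM with h | h
            · exact Or.inl (hXsub h)
            · exact Or.inr (hXsub h)
    · by_cases hbw : b = w
      · subst hbw
        rcases Option.eq_none_or_eq_some u' with hu' | ⟨y, hu'⟩
        · -- u' = none
          have hBPM : IsBlockingPair E bU bW ru rw M a b := by
            refine ⟨hEab, ?_, ?_, ?_⟩
            · intro h
              refine habM' ((hmem (a, b)).2 (Or.inl ⟨h, ?_, ?_⟩))
              · rintro x hx he; exact hxw x hx (congrArg Prod.snd he).symm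
              · rintro y hy he; rw [hu'] at hy; cases hy
            · rwa [hPUa a hau (fun y hy => by rw [hu'] at hy; cases hy)] at hacond
            · rw [hPWw' hu'] at hbcond
              rcases hbcond with h | ⟨z, hz, hlt⟩
              · exact Or.inl (lt_of_le_of_lt
                  (Finset.card_le_card (Finset.subset_insert _ _)) h)
              · rcases Finset.mem_insert.1 hz with rfl | hz2
                · rcases hw_cond with h | ⟨u'', hu'', hlt2⟩
                  · exact Or.inl h
                  · exact Or.inr ⟨u'', hu'', lt_trans hlt hlt2⟩
                · exact Or.inr ⟨z, hz2, hlt⟩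
          rcases hinv a b hBPM with h | h
          · exact Or.inl (hXsub h)
          · exact Or.inr (hXsub h)
        · -- u' = some y
          by_cases hay : a = y
          · exfalso
            subst hay
            rw [hPWw a hu', hcardw a hu'] at hbcond
            rcases hbcond with h | ⟨z, hz, hlt⟩
            · omega
            · rcases Finset.mem_insert.1 hz with rfl | hz2
              · exact absurd (hprefw a hu') (by omega)
              · exact absurd hlt (not_lt.2 ((hmaxw a hu').2 z
                  (Finset.mem_of_mem_erase hz2)))
          · have hBPM : IsBlockingPair E bU bW ru rw M a b := by
              refine ⟨hEab, ?_, ?_, ?_⟩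
              · intro h
                refine habM' ((hmem (a, b)).2 (Or.inl ⟨h, ?_, ?_⟩))
                · rintro x hx he
                  exact hxw x hx (congrArg Prod.snd he).symm
                · rintro y' hy' he
                  rw [hu'] at hy'; cases hy'
                  exact hay (congrArg Prod.fst he)
              · rwa [hPUa a hau (fun y' hy' => by
                  rw [hu'] at hy'; cases hy'; exact hay)] at hacond
              · rw [hPWw y hu', hcardw y hu'] at hbcond
                rcases hbcond with h | ⟨z, hz, hlt⟩
                · exact Or.inl (by have := husome y hu'; omega)
                · rcases Finset.mem_insert.1 hz with rfl | hz2
                  · exact Or.inr ⟨y, (hmaxw y hu').1, lt_trans hlt (hprefw y hu')⟩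
                  · exact Or.inr ⟨z, Finset.mem_of_mem_erase hz2, hlt⟩
            rcases hinv a b hBPM with h | h
            · exact Or.inl (hXsub h)
            · exact Or.inr (hXsub h)
      · -- a ≠ u, b ≠ w
        have habM : (a, b) ∉ M := by
          intro h
          refine habM' ((hmem (a, b)).2 (Or.inl ⟨h, ?_, ?_⟩))
          · rintro x hx he; exact absurd (congrArg Prod.fst he) hau
          · rintro y hy he; exact absurd (congrArg Prod.snd he) hbw
        have haside : Sum.inl a ∈ s'.2 ∨
            ((partnersU M a).card < bU a ∨ ∃ y ∈ partnersU M a, ru a b < ru a y) := by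
          rcases Option.eq_none_or_eq_some u' with hu'' | ⟨y, hu''⟩
          · exact Or.inr (by
              rwa [hPUa a hau (fun y hy => by rw [hu''] at hy; cases hy)] at hacond)
          · by_cases hay : a = y
            · subst hay
              by_cases hfa : (partnersU M a).card = bU a
              · exact Or.inl (hXu' a hu'' hfa)
              · refine Or.inr ?_
                rw [hPUy a hu'' hau] at hacond
                have hwPa : w ∈ partnersU M a :=
                  (mem_partnersU M a w).2 ((mem_partnersW M w a).1 (hmaxw a hu'').1)
                rcases hacond with h | ⟨y', hy', hlt⟩
                · refine Or.inl ?_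
                  have h2 := Finset.card_erase_of_mem hwPa
                  have h3 : 0 < (partnersU M a).card := Finset.card_pos.2 ⟨w, hwPa⟩
                  omega
                · exact Or.inr ⟨y', Finset.mem_of_mem_erase hy', hlt⟩
            · exact Or.inr (by
                rwa [hPUa a hau (fun y' hy' => by
                  rw [hu''] at hy'; cases hy'; exact hay)] at hacond)
        have hbside : Sum.inr b ∈ s'.2 ∨
            ((partnersW M b).card < bW b ∨ ∃ z ∈ partnersW M b, rw b a < rw b z) := by
          rcases Option.eq_none_or_eq_some w' with hw'' | ⟨x, hw''⟩
          · exact Or.inr (by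
              rwa [hPWb b hbw (fun x hx => by rw [hw''] at hx; cases hx)] at hbcond)
          · by_cases hbx : b = x
            · subst hbx
              by_cases hfb : (partnersW M b).card = bW b
              · exact Or.inl (hXw' b hw'' hfb)
              · refine Or.inr ?_
                rw [hPWx b hw'' hbw] at hbcond
                have huPb : u ∈ partnersW M b :=
                  (mem_partnersW M b u).2 ((mem_partnersU M u b).1 (hmaxu b hw'').1)
                rcases hbcond with h | ⟨z, hz, hlt⟩
                · refine Or.inl ?_
                  have h2 := Finset.card_erase_of_mem huPb
                  have h3 : 0 < (partnersW M b).card := Finset.card_pos.2 ⟨u, huPb⟩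
                  omega
                · exact Or.inr ⟨z, Finset.mem_of_mem_erase hz, hlt⟩
            · exact Or.inr (by
                rwa [hPWb b hbw (fun x' hx' => by
                  rw [hw''] at hx'; cases hx'; exact hbx)] at hbcond)
        rcases haside with h | hacondM
        · exact Or.inl h
        rcases hbside with h | hbcondM
        · exact Or.inr h
        rcases hinv a b ⟨hEab, habM, hacondM, hbcondM⟩ with h | h
        · exact Or.inl (hXsub h)
        · exact Or.inr (hXsub h)

/-- If the BP removal process (started from an examination set `X₀ = Q_a` such that
every blocking pair of the initial matching involves an agent of `X₀`, as guaranteed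
by Proposition 1) terminates after `n` steps with an empty examination set, then the
resulting matching is stable under the current strict preferences. -/
theorem removal_process_terminates_stable
    {U W : Type*} [DecidableEq U] [DecidableEq W]
    (E : U → W → Prop) (bU : U → ℕ) (bW : W → ℕ)
    (ru : U → W → ℕ) (rw : W → U → ℕ)
    (f : ℕ → Finset (U × W) × Finset (U ⊕ W)) (n : ℕ)
    -- initially, every blocking pair involves an agent of the examination set
    (hinit : ∀ u w, IsBlockingPair E bU bW ru rw (f 0).1 u w →
      Sum.inl u ∈ (f 0).2 ∨ Sum.inr w ∈ (f 0).2)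
    (hstep : ∀ k < n, RemovalStep E bU bW ru rw (f k) (f (k + 1)))
    (hterm : (f n).2 = ∅) :
    ∀ u w, ¬ IsBlockingPair E bU bW ru rw (f n).1 u w := by
  have key : ∀ k, k ≤ n → ∀ u w, IsBlockingPair E bU bW ru rw (f k).1 u w →
      Sum.inl u ∈ (f k).2 ∨ Sum.inr w ∈ (f k).2 := by
    intro k
    induction k with
    | zero => intro _; exact hinit
    | succ k ih =>
      intro hk
      exact removal_step_inv E bU bW ru rw (hstep k (by omega)) (ih (by omega))
  intro u w h
  rcases key n le_rfl u w h with h2 | h2 <;> simp [hterm] at h2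
end
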